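/- arXiv:2605.16904 — 3 statements merged into one kernel-verified Lean document; each statement's English description precedes it below -/
import Mathlib

section
/- Let θ be a strictly positive stochastic matrix on a finite set Σ with stationary distribution q (strictly positive), and let κ > 0 be such that θ(a,b) ≥ κ q(b) for all a, b. Then for every probability distribution p on Σ, D(pθ ‖ q) ≤ (1 − κ) D(p ‖ q). -/
/-!
Split `θ a b = κ q b + (θ a b - κ q b)` with a nonnegative remainder. At each output `b`, the
log-sum inequality applied to the induced splittings of `(pθ) b` and of `q b = (qθ) b` bounds the
`b`-th term of `D(pθ ‖ q)` by `∑ a, (θ a b - κ q b) p a log (p a / q a)`: the common part `κ q b`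
costs nothing. Summing over `b`, the remainder rows have mass `1 - κ`.
-/

open scoped BigOperators

/-- Kullback-Leibler divergence between two distributions on a finite set (real-valued). -/
noncomputable def Dkl {α : Type*} [Fintype α] (p q : α → ℝ) : ℝ :=
  ∑ a, p a * Real.log (p a / q a)

open Finset Real

lemma weighted_log_sum_le {ι : Type*} (s : Finset ι) {w x y : ι → ℝ}
    (hw : ∀ i ∈ s, 0 ≤ w i) (hx : ∀ i ∈ s, 0 ≤ x i) (hy : ∀ i ∈ s, 0 < y i) :
    (∑ i ∈ s, w i * x i) * log ((∑ i ∈ s, w i * x i) / ∑ i ∈ s, w i * y i) ≤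
      ∑ i ∈ s, w i * (x i * log (x i / y i)) := by
  set W := ∑ i ∈ s, w i * y i
  rcases (sum_nonneg fun i hi => mul_nonneg (hw i hi) (hy i hi).le : 0 ≤ W).eq_or_lt
    with hW | hW
  · have hw0 : ∀ i ∈ s, w i = 0 := fun i hi => by
      have := (sum_eq_zero_iff_of_nonneg fun i hi => mul_nonneg (hw i hi) (hy i hi).le).1
        hW.symm i hi
      simpa [(hy i hi).ne'] using this
    rw [sum_eq_zero fun i hi => by simp [hw0 i hi], sum_eq_zero fun i hi => by simp [hw0 i hi]]
    simp
  -- Jensen for `t ↦ t log t` with weights `w i y i / W` at the points `x i / y i`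
  have jensen := convexOn_mul_log.map_sum_le (t := s) (w := fun i => w i * y i / W)
    (p := fun i => x i / y i)
    (fun i hi => div_nonneg (mul_nonneg (hw i hi) (hy i hi).le) hW.le)
    (by rw [← sum_div, div_self hW.ne'])
    (fun i hi => Set.mem_Ici.2 (div_nonneg (hx i hi) (hy i hi).le))
  have hmean : ∑ i ∈ s, (w i * y i / W) • (x i / y i) = (∑ i ∈ s, w i * x i) / W := by
    rw [sum_div]
    refine sum_congr rfl fun i hi => ?_
    rw [smul_eq_mul]
    field_simp [(hy i hi).ne']
  have hvalues : ∑ i ∈ s, (w i * y i / W) • (x i / y i * log (x i / y i)) =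
      (∑ i ∈ s, w i * (x i * log (x i / y i))) / W := by
    rw [sum_div]
    refine sum_congr rfl fun i hi => ?_
    rw [smul_eq_mul]
    field_simp [(hy i hi).ne']
  rw [hmean, hvalues, div_mul_eq_mul_div, div_le_div_iff_of_pos_right hW] at jensen
  exact jensen

section Doeblin

variable {S : Type*} [Fintype S] (θ : S → S → ℝ) (q : S → ℝ) (κ : ℝ)

lemma sum_mul_sub_minorant {f : S → ℝ} (hf : ∑ a, f a = 1) (b : S) :
    ∑ a, f a * (θ a b - κ * q b) = ∑ a, f a * θ a b - κ * q b := by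
  simp only [mul_sub, sum_sub_distrib, ← sum_mul, hf, one_mul]

lemma mul_log_div_le_of_minorant (hq1 : ∑ a, q a = 1) (hstat : ∀ b, ∑ a, q a * θ a b = q b)
    (hqpos : ∀ a, 0 < q a) (hκ : 0 ≤ κ) (hκθ : ∀ a b, κ * q b ≤ θ a b)
    {p : S → ℝ} (hp0 : ∀ a, 0 ≤ p a) (hp1 : ∑ a, p a = 1) (b : S) :
    (∑ a, p a * θ a b) * log ((∑ a, p a * θ a b) / q b) ≤
      ∑ a, (θ a b - κ * q b) * (p a * log (p a / q a)) := by
  -- The index `none` carries the input-independent part `κ q b` of `θ · b`, at ratio `1 / 1`.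
  have h := weighted_log_sum_le univ
    (w := fun o : Option S => o.elim (κ * q b) fun a => θ a b - κ * q b)
    (x := fun o => o.elim 1 p) (y := fun o => o.elim 1 q)
    (by rintro (_ | a) -
        exacts [mul_nonneg hκ (hqpos b).le, sub_nonneg.2 (hκθ a b)])
    (by rintro (_ | a) - <;> simp [hp0])
    (by rintro (_ | a) - <;> simp [hqpos])
  simp only [Fintype.sum_option, Option.elim_none, Option.elim_some, mul_one, div_one, log_one,
    mul_zero, zero_add] at h
  simp only [mul_comm (θ _ b - κ * q b), sum_mul_sub_minorant θ q κ hp1,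
    sum_mul_sub_minorant θ q κ hq1, hstat, add_sub_cancel] at h
  exact h.trans_eq (sum_congr rfl fun a _ => mul_comm _ _)

end Doeblin

theorem stmt3_general {S : Type*} [Fintype S]
    (θ : S → S → ℝ) (q : S → ℝ) (κ : ℝ)
    (hθ1 : ∀ a, ∑ b, θ a b = 1)
    (hqpos : ∀ a, 0 < q a) (hq1 : ∑ a, q a = 1)
    (hstat : ∀ b, ∑ a, q a * θ a b = q b)
    (hκ : 0 < κ) (hκθ : ∀ a b, κ * q b ≤ θ a b)
    (p : S → ℝ) (hp0 : ∀ a, 0 ≤ p a) (hp1 : ∑ a, p a = 1) :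
    Dkl (fun b => ∑ a, p a * θ a b) q ≤ (1 - κ) * Dkl p q := by
  calc Dkl (fun b => ∑ a, p a * θ a b) q
      ≤ ∑ b, ∑ a, (θ a b - κ * q b) * (p a * log (p a / q a)) :=
        sum_le_sum fun b _ =>
          mul_log_div_le_of_minorant θ q κ hq1 hstat hqpos hκ.le hκθ hp0 hp1 b
    _ = ∑ a, (∑ b, (θ a b - κ * q b)) * (p a * log (p a / q a)) := by
        rw [sum_comm]; simp only [sum_mul]
    _ = (1 - κ) * Dkl p q := by
        simp only [sum_sub_distrib, ← mul_sum, hθ1, hq1, mul_one, Dkl]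

/-- Strong data processing inequality: if `θ : S × S → (0,1)` is a strictly positive stochastic
matrix with stationary distribution `q : S → (0,1)`, and `κ > 0` satisfies `θ(a,b) ≥ κ q(b)`
for all `a, b`, then `D(pθ ‖ q) ≤ (1 − κ) D(p ‖ q)` for every probability distribution `p`. -/
theorem stmt3 {S : Type*} [Fintype S]
    (θ : S → S → ℝ) (q : S → ℝ) (κ : ℝ)
    (hθpos : ∀ a b, 0 < θ a b) (hθlt : ∀ a b, θ a b < 1)
    (hθ1 : ∀ a, ∑ b, θ a b = 1)
    (hqpos : ∀ a, 0 < q a) (hqlt : ∀ a, q a < 1) (hq1 : ∑ a, q a = 1)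
    (hstat : ∀ b, ∑ a, q a * θ a b = q b)
    (hκ : 0 < κ) (hκθ : ∀ a b, κ * q b ≤ θ a b)
    (p : S → ℝ) (hp0 : ∀ a, 0 ≤ p a) (hp1 : ∑ a, p a = 1) :
    Dkl (fun b => ∑ a, p a * θ a b) q ≤ (1 - κ) * Dkl p q :=
  stmt3_general θ q κ hθ1 hqpos hq1 hstat hκ hκθ p hp0 hp1
end

section
/- Let θ be a strictly positive stochastic matrix on a finite set Σ with stationary distribution q, and κ > 0 with θ(a,b) ≥ κ q(b) for all a,b. Let θ_n be the stochastic matrix on Σ^n given by θ_n(a,b) = Π_{i=1}^n θ(a_i, b_i) (synchronous independent updating of n coordinates). Then for every probability distribution p on Σ^n, D(p θ_n ‖ q^{⊗n}) ≤ (1 − κ) D(p ‖ q^{⊗n}), where q^{⊗n} is the product distribution with marginal q. -/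
/-!
Doeblin's condition splits `θ a b = κ q b + R a b` with `R ≥ 0` of row sums `1 - κ`, and
stationarity gives `q R = (1 - κ) q`. Hence `p θ = κ q + p R` and `q = κ q + q R`, and joint
convexity of KL divergence (the log-sum inequality) followed by data processing through `R`
yields `D(p θ ‖ q) ≤ (1 - κ) D(p ‖ q)`. Such a strong data processing inequality tensorizes:
the chain rule splits the divergence from a product reference into a first-coordinate term and
conditional second-coordinate terms, and both contract by the same factor, the conditional ones
after one more use of joint convexity. Induction on `n` finishes the proof.
-/

open scoped BigOperators

open Finset Real

lemma tangent_le_mul_log_div {x y t : ℝ} (hx : 0 ≤ x) (hy : 0 ≤ y) (hxy : y = 0 → x = 0)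
    (ht : 0 < t) : x * log t + x - t * y ≤ x * log (x / y) := by
  rcases hx.eq_or_lt with rfl | hx
  · simp [mul_nonneg ht.le hy]
  have hy : 0 < y := hy.lt_of_ne fun h => hx.ne' (hxy h.symm)
  have h := log_le_sub_one_of_pos (show 0 < t * y / x by positivity)
  have hlog : log (t * y / x) = log t - log (x / y) := by
    rw [log_div (by positivity) hx.ne', log_mul ht.ne' hy.ne', log_div hx.ne' hy.ne']
    ring
  have hmul : x * (t * y / x - 1) = t * y - x := by field_simp
  rw [hlog] at h
  nlinarith [mul_le_mul_of_nonneg_left h hx.le]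

lemma sum_mul_log_div_sum_le {ι : Type*} (s : Finset ι) {x y : ι → ℝ}
    (hx : ∀ i ∈ s, 0 ≤ x i) (hy : ∀ i ∈ s, 0 ≤ y i) (hxy : ∀ i ∈ s, y i = 0 → x i = 0) :
    (∑ i ∈ s, x i) * log ((∑ i ∈ s, x i) / ∑ i ∈ s, y i) ≤ ∑ i ∈ s, x i * log (x i / y i) := by
  set X := ∑ i ∈ s, x i
  set Y := ∑ i ∈ s, y i
  rcases (sum_nonneg hx).eq_or_lt with hX | hX
  · have hx0 := (sum_eq_zero_iff_of_nonneg hx).mp hX.symm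
    rw [show X = 0 from hX.symm, zero_mul, sum_eq_zero fun i hi => by rw [hx0 i hi, zero_mul]]
  have hY : 0 < Y := by
    refine (sum_nonneg hy).lt_of_ne fun hY => hX.ne' ?_
    exact sum_eq_zero fun i hi => hxy i hi ((sum_eq_zero_iff_of_nonneg hy).mp hY.symm i hi)
  calc X * log (X / Y) = ∑ i ∈ s, (x i * log (X / Y) + x i - X / Y * y i) := by
        rw [sum_sub_distrib, sum_add_distrib, ← sum_mul, ← mul_sum]
        field_simp
        ring
    _ ≤ ∑ i ∈ s, x i * log (x i / y i) :=
        sum_le_sum fun i hi => tangent_le_mul_log_div (hx i hi) (hy i hi) (hxy i hi) (by positivity)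

section Dkl

variable {α ι : Type*} [Fintype α]

lemma Dkl_self (r : α → ℝ) : Dkl r r = 0 :=
  sum_eq_zero (s := univ) fun a _ => by rcases eq_or_ne (r a) 0 with h | h <;> simp [h]

lemma Dkl_zero_left (r : α → ℝ) : Dkl (fun _ => 0) r = 0 := by
  simp [Dkl]

lemma Dkl_const_mul (c : ℝ) (ν r : α → ℝ) :
    Dkl (fun a => c * ν a) (fun a => c * r a) = c * Dkl ν r := by
  rcases eq_or_ne c 0 with rfl | hc
  · simp [Dkl]
  simp only [Dkl, mul_sum, mul_div_mul_left _ _ hc, mul_assoc]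

lemma Dkl_mul_right (x y : ℝ) (m : α → ℝ) :
    Dkl (fun a => x * m a) (fun a => y * m a) = x * log (x / y) * ∑ a, m a := by
  simp only [Dkl, mul_sum]
  refine sum_congr rfl fun a _ => ?_
  rcases eq_or_ne (m a) 0 with h | h
  · simp [h]
  rw [mul_div_mul_right _ _ h]
  ring

lemma Dkl_sum_le (s : Finset ι) {ν r : ι → α → ℝ} (hν : ∀ i ∈ s, ∀ a, 0 ≤ ν i a)
    (hr : ∀ i ∈ s, ∀ a, 0 ≤ r i a) (hνr : ∀ i ∈ s, ∀ a, r i a = 0 → ν i a = 0) :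
    Dkl (fun a => ∑ i ∈ s, ν i a) (fun a => ∑ i ∈ s, r i a) ≤ ∑ i ∈ s, Dkl (ν i) (r i) := by
  simp only [Dkl]
  rw [sum_comm]
  exact sum_le_sum fun a _ => sum_mul_log_div_sum_le s (fun i hi => hν i hi a)
    (fun i hi => hr i hi a) (fun i hi => hνr i hi a)

lemma Dkl_add_le {ν₁ ν₂ r₁ r₂ : α → ℝ} (hν₁ : ∀ a, 0 ≤ ν₁ a) (hν₂ : ∀ a, 0 ≤ ν₂ a)
    (hr₁ : ∀ a, 0 ≤ r₁ a) (hr₂ : ∀ a, 0 ≤ r₂ a)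
    (hνr₁ : ∀ a, r₁ a = 0 → ν₁ a = 0) (hνr₂ : ∀ a, r₂ a = 0 → ν₂ a = 0) :
    Dkl (fun a => ν₁ a + ν₂ a) (fun a => r₁ a + r₂ a) ≤ Dkl ν₁ r₁ + Dkl ν₂ r₂ := by
  simpa [Fin.sum_univ_two] using Dkl_sum_le (ν := ![ν₁, ν₂]) (r := ![r₁, r₂]) univ
    (by simp [Fin.forall_fin_two, hν₁, hν₂]) (by simp [Fin.forall_fin_two, hr₁, hr₂])
    (by simpa [Fin.forall_fin_two] using ⟨hνr₁, hνr₂⟩)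

lemma Dkl_comp_le {β : Type*} [Fintype β] {p q : α → ℝ} {M : α → β → ℝ} {c : ℝ}
    (hp : ∀ a, 0 ≤ p a) (hq : ∀ a, 0 ≤ q a) (hpq : ∀ a, q a = 0 → p a = 0)
    (hM : ∀ a b, 0 ≤ M a b) (hM1 : ∀ a, ∑ b, M a b = c) :
    Dkl (fun b => ∑ a, p a * M a b) (fun b => ∑ a, q a * M a b) ≤ c * Dkl p q := by
  calc _ ≤ ∑ a, Dkl (fun b => p a * M a b) (fun b => q a * M a b) :=
        Dkl_sum_le univ (fun a _ b => mul_nonneg (hp a) (hM a b))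
          (fun a _ b => mul_nonneg (hq a) (hM a b))
          (fun a _ b h => by rcases mul_eq_zero.mp h with h | h <;> simp [h, hpq])
    _ = c * Dkl p q := by
        simp only [Dkl_mul_right, hM1]
        rw [Dkl, mul_sum]
        exact sum_congr rfl fun a _ => by ring

lemma Dkl_prod_eq_add_sum {β : Type*} [Fintype β] {P : α × β → ℝ} {r₁ : α → ℝ} {r₂ : β → ℝ}
    (hP : ∀ x, 0 ≤ P x) (hr₁ : ∀ a, r₁ a ≠ 0) (hr₂ : ∀ b, r₂ b ≠ 0) :
    Dkl P (fun x => r₁ x.1 * r₂ x.2) = Dkl (fun a => ∑ b, P (a, b)) r₁ +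
      ∑ a, Dkl (fun b => P (a, b)) (fun b => (∑ b', P (a, b')) * r₂ b) := by
  simp only [Dkl, Fintype.sum_prod_type, ← sum_add_distrib]
  refine sum_congr rfl fun a _ => ?_
  rw [sum_mul, ← sum_add_distrib]
  refine sum_congr rfl fun b _ => ?_
  rcases (hP (a, b)).eq_or_lt with h | h
  · simp [← h]
  have hsum : 0 < ∑ b', P (a, b') :=
    h.trans_le (single_le_sum (fun b' _ => hP (a, b')) (mem_univ b))
  rw [← mul_add, ← log_mul (div_ne_zero hsum.ne' (hr₁ a))
    (div_ne_zero h.ne' (mul_ne_zero hsum.ne' (hr₂ b)))]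
  congr 2
  field_simp

lemma Dkl_sum_mul_le (s : Finset ι) {w : ι → ℝ} {ν r : ι → α → ℝ}
    (hw : ∀ i ∈ s, 0 ≤ w i) (hν : ∀ i ∈ s, ∀ a, 0 ≤ ν i a)
    (hr : ∀ i ∈ s, ∀ a, 0 ≤ r i a) (hνr : ∀ i ∈ s, ∀ a, r i a = 0 → ν i a = 0) :
    Dkl (fun a => ∑ i ∈ s, w i * ν i a) (fun a => ∑ i ∈ s, w i * r i a) ≤
      ∑ i ∈ s, w i * Dkl (ν i) (r i) := by
  refine (Dkl_sum_le s (fun i hi a => mul_nonneg (hw i hi) (hν i hi a))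
    (fun i hi a => mul_nonneg (hw i hi) (hr i hi a)) fun i hi a h => ?_).trans_eq ?_
  · rcases mul_eq_zero.mp h with h | h <;> simp [h, hνr i hi a]
  · exact sum_congr rfl fun i _ => Dkl_const_mul _ _ _

lemma Dkl_comp_equiv {β : Type*} [Fintype β] (e : β ≃ α) (f g : α → ℝ) :
    Dkl (fun b => f (e b)) (fun b => g (e b)) = Dkl f g :=
  e.sum_comp fun a => f a * log (f a / g a)

end Dkl

/-- `η` is a contraction coefficient of the kernel `K` for KL divergence towards `r`: a strong
data processing inequality. -/
def SDPI {α : Type*} [Fintype α] (K : α → α → ℝ) (r : α → ℝ) (η : ℝ) : Prop :=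
  ∀ p : α → ℝ, (∀ a, 0 ≤ p a) → ∑ a, p a = 1 →
    Dkl (fun b => ∑ a, p a * K a b) r ≤ η * Dkl p r

namespace SDPI

variable {α β : Type*} [Fintype α] [Fintype β] {η : ℝ}

lemma of_doeblin {θ : α → α → ℝ} {q : α → ℝ} {κ : ℝ} (hθ1 : ∀ a, ∑ b, θ a b = 1)
    (hq : ∀ a, 0 < q a) (hq1 : ∑ a, q a = 1) (hstat : ∀ b, ∑ a, q a * θ a b = q b)
    (hκ : 0 ≤ κ) (hκθ : ∀ a b, κ * q b ≤ θ a b) : SDPI θ q (1 - κ) := by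
  intro p hp hp1
  set R : α → α → ℝ := fun a b => θ a b - κ * q b
  have hR : ∀ a b, 0 ≤ R a b := fun a b => sub_nonneg.mpr (hκθ a b)
  have hR1 : ∀ a, ∑ b, R a b = 1 - κ := fun a => by
    rw [sum_sub_distrib, hθ1, ← mul_sum, hq1, mul_one]
  have hsplit : ∀ p : α → ℝ, ∑ a, p a = 1 → ∀ b, ∑ a, p a * θ a b = κ * q b + ∑ a, p a * R a b :=
    fun p hp1 b => by
      simp only [R, mul_sub, sum_sub_distrib, ← sum_mul, hp1]
      ring
  have hqR : ∀ b, ∑ a, q a * R a b = 0 → ∑ a, p a * R a b = 0 := fun b h => by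
    have hterm := (sum_eq_zero_iff_of_nonneg fun a _ => mul_nonneg (hq a).le (hR a b)).mp h
    exact sum_eq_zero fun a ha => by
      rw [(mul_eq_zero.mp (hterm a ha)).resolve_left (hq a).ne', mul_zero]
  calc Dkl (fun b => ∑ a, p a * θ a b) q
      = Dkl (fun b => κ * q b + ∑ a, p a * R a b) (fun b => κ * q b + ∑ a, q a * R a b) := by
        congr 1 <;> funext b
        · exact hsplit p hp1 b
        · rw [← hsplit q hq1 b, hstat]
    _ ≤ Dkl (fun b => κ * q b) (fun b => κ * q b) + Dkl (fun b => ∑ a, p a * R a b)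
          (fun b => ∑ a, q a * R a b) :=
        Dkl_add_le (fun b => mul_nonneg hκ (hq b).le)
          (fun b => sum_nonneg fun a _ => mul_nonneg (hp a) (hR a b))
          (fun b => mul_nonneg hκ (hq b).le)
          (fun b => sum_nonneg fun a _ => mul_nonneg (hq a).le (hR a b)) (fun _ => id) hqR
    _ ≤ (1 - κ) * Dkl p q := by
        rw [Dkl_self, zero_add]
        exact Dkl_comp_le hp (fun a => (hq a).le) (fun a h => absurd h (hq a).ne') hR hR1

lemma apply_nonneg {K : α → α → ℝ} {r : α → ℝ} (h : SDPI K r η) {ν : α → ℝ}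
    (hν : ∀ a, 0 ≤ ν a) :
    Dkl (fun b => ∑ a, ν a * K a b) (fun b => (∑ a, ν a) * r b) ≤
      η * Dkl ν (fun b => (∑ a, ν a) * r b) := by
  set c := ∑ a, ν a
  rcases (sum_nonneg fun a _ => hν a).eq_or_lt with hc | hc
  · obtain rfl : ν = fun _ => 0 :=
      funext fun a => (sum_eq_zero_iff_of_nonneg fun a _ => hν a).mp hc.symm a (mem_univ a)
    simp [Dkl_zero_left]
  have hνc : ∀ a, ν a = c * (ν a / c) := fun a => (mul_div_cancel₀ _ hc.ne').symm
  have hνK : ∀ b, ∑ a, ν a * K a b = c * ∑ a, ν a / c * K a b := fun b => by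
    simp only [mul_sum, ← mul_assoc, ← hνc]
  have key := h (fun a => ν a / c) (fun a => div_nonneg (hν a) hc.le)
    (by rw [← sum_div, div_self hc.ne'])
  calc Dkl (fun b => ∑ a, ν a * K a b) (fun b => c * r b)
      = c * Dkl (fun b => ∑ a, ν a / c * K a b) r := by
        simp only [hνK, Dkl_const_mul]
    _ ≤ c * (η * Dkl (fun a => ν a / c) r) := mul_le_mul_of_nonneg_left key hc.le
    _ = η * Dkl ν (fun b => c * r b) := by
        rw [mul_left_comm, ← Dkl_const_mul]
        simp only [← hνc]

lemma prod {K₁ : α → α → ℝ} {K₂ : β → β → ℝ} {r₁ : α → ℝ} {r₂ : β → ℝ}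
    (h₁ : SDPI K₁ r₁ η) (h₂ : SDPI K₂ r₂ η) (hη : 0 ≤ η)
    (hK₁ : ∀ a a', 0 ≤ K₁ a a') (hK₁1 : ∀ a, ∑ a', K₁ a a' = 1)
    (hK₂ : ∀ b b', 0 ≤ K₂ b b') (hK₂1 : ∀ b, ∑ b', K₂ b b' = 1)
    (hr₁ : ∀ a, 0 < r₁ a) (hr₂ : ∀ b, 0 < r₂ b) :
    SDPI (fun x y : α × β => K₁ x.1 y.1 * K₂ x.2 y.2) (fun x => r₁ x.1 * r₂ x.2) η := by
  intro P hP hP1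
  set P₁ : α → ℝ := fun a => ∑ b, P (a, b)
  -- `μ a'` is the unnormalized law of the second coordinate once the first has moved to `a'`;
  -- the output's second coordinate given `a'` is then `μ a'` pushed through `K₂`.
  set μ : α → β → ℝ := fun a' b => ∑ a, K₁ a a' * P (a, b)
  have hμ : ∀ a' b, 0 ≤ μ a' b := fun a' b =>
    sum_nonneg fun a _ => mul_nonneg (hK₁ a a') (hP _)
  have hμsum : ∀ a', ∑ b, μ a' b = ∑ a, P₁ a * K₁ a a' := fun a' => by
    simp only [μ, P₁, sum_mul]
    rw [sum_comm]
    exact sum_congr rfl fun a _ => sum_congr rfl fun b _ => mul_comm _ _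
  have hQ : (fun y : α × β => ∑ x, P x * (K₁ x.1 y.1 * K₂ x.2 y.2)) =
      fun y => ∑ b, μ y.1 b * K₂ b y.2 := by
    funext y
    simp only [μ, Fintype.sum_prod_type, sum_mul]
    rw [sum_comm]
    exact sum_congr rfl fun b _ => sum_congr rfl fun a _ => by ring
  have hQ₁ : ∀ a', ∑ b', ∑ b, μ a' b * K₂ b b' = ∑ a, P₁ a * K₁ a a' := fun a' => by
    rw [sum_comm]
    simp only [← mul_sum, hK₂1, mul_one, hμsum]
  have hmix : ∀ a', Dkl (μ a') (fun b => (∑ b', μ a' b') * r₂ b) ≤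
      ∑ a, K₁ a a' * Dkl (fun b => P (a, b)) (fun b => P₁ a * r₂ b) := fun a' => by
    have hr : (fun b => (∑ b', μ a' b') * r₂ b) = fun b => ∑ a, K₁ a a' * (P₁ a * r₂ b) := by
      funext b
      rw [hμsum, sum_mul]
      exact sum_congr rfl fun a _ => by ring
    rw [hr]
    refine Dkl_sum_mul_le univ (fun a _ => hK₁ a a') (fun a _ b => hP (a, b))
      (fun a _ b => mul_nonneg (sum_nonneg fun b _ => hP (a, b)) (hr₂ b).le) fun a _ b h => ?_
    have hP₁ : P₁ a = 0 := (mul_eq_zero.mp h).resolve_right (hr₂ b).ne'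
    exact (sum_eq_zero_iff_of_nonneg fun b _ => hP (a, b)).mp hP₁ b (mem_univ b)
  rw [hQ, Dkl_prod_eq_add_sum (fun y => sum_nonneg fun b _ => mul_nonneg (hμ _ _) (hK₂ _ _))
    (fun a => (hr₁ a).ne') (fun b => (hr₂ b).ne'),
    Dkl_prod_eq_add_sum hP (fun a => (hr₁ a).ne') (fun b => (hr₂ b).ne'), mul_add]
  simp only [hQ₁]
  refine add_le_add (h₁ P₁ (fun a => sum_nonneg fun b _ => hP (a, b))
    (by rw [← hP1, Fintype.sum_prod_type])) ?_
  calc ∑ a', Dkl (fun b' => ∑ b, μ a' b * K₂ b b') (fun b' => (∑ a, P₁ a * K₁ a a') * r₂ b')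
      ≤ ∑ a', η * ∑ a, K₁ a a' * Dkl (fun b => P (a, b)) (fun b => P₁ a * r₂ b) :=
        sum_le_sum fun a' _ => by
          rw [← hμsum]
          exact (h₂.apply_nonneg (hμ a')).trans (mul_le_mul_of_nonneg_left (hmix a') hη)
    _ = η * ∑ a, Dkl (fun b => P (a, b)) (fun b => P₁ a * r₂ b) := by
        rw [← mul_sum, sum_comm]
        simp only [← sum_mul, hK₁1, one_mul]

lemma comp_equiv {K : α → α → ℝ} {r : α → ℝ} (h : SDPI K r η) (e : β ≃ α) :
    SDPI (fun b b' => K (e b) (e b')) (fun b => r (e b)) η := by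
  intro p hp hp1
  have hpush : ∀ b', ∑ b, p b * K (e b) (e b') = ∑ a, p (e.symm a) * K a (e b') := fun b' => by
    rw [← e.symm.sum_comp]
    simp only [e.apply_symm_apply]
  calc Dkl (fun b' => ∑ b, p b * K (e b) (e b')) (fun b => r (e b))
      = Dkl (fun a' => ∑ a, p (e.symm a) * K a a') r := by
        simp only [hpush]
        exact Dkl_comp_equiv e (fun a' => ∑ a, p (e.symm a) * K a a') r
    _ ≤ η * Dkl (fun a => p (e.symm a)) r := h _ (fun a => hp _) (by rwa [e.symm.sum_comp])
    _ = η * Dkl p (fun b => r (e b)) := by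
        rw [← Dkl_comp_equiv e]
        simp only [e.symm_apply_apply]

lemma pi {K : α → α → ℝ} {r : α → ℝ} (h : SDPI K r η) (hη : 0 ≤ η)
    (hK : ∀ a a', 0 ≤ K a a') (hK1 : ∀ a, ∑ a', K a a' = 1) (hr : ∀ a, 0 < r a) :
    ∀ n, SDPI (fun a b : Fin n → α => ∏ i, K (a i) (b i)) (fun a => ∏ i, r (a i)) η
  | 0 => fun p _ hp1 => by
    simp only [Fintype.sum_unique] at hp1
    simp [Dkl, hp1]
  | n + 1 => by
    have ih := pi h hη hK hK1 hr n
    have hprod := (h.prod ih hη hK hK1 (fun a b => prod_nonneg fun i _ => hK _ _)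
      (fun a => by rw [← Fintype.prod_sum]; simp [hK1]) hr
      (fun a => prod_pos fun i _ => hr _)).comp_equiv (Fin.consEquiv fun _ => α).symm
    simpa only [Fin.prod_univ_succ, Fin.consEquiv_symm_apply, Fin.tail] using hprod

end SDPI

lemma le_one_of_doeblin {α : Type*} [Fintype α] {θ : α → α → ℝ} {q : α → ℝ} {κ : ℝ}
    (hθ1 : ∀ a, ∑ b, θ a b = 1) (hq : ∀ a, 0 ≤ q a) (hq1 : ∑ a, q a = 1)
    (hκθ : ∀ a b, κ * q b ≤ θ a b) : κ ≤ 1 :=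
  calc κ = ∑ a, q a * ∑ b, κ * q b := by rw [← mul_sum, hq1, ← sum_mul, hq1, one_mul, mul_one]
    _ ≤ ∑ a, q a * ∑ b, θ a b :=
      sum_le_sum fun a _ => mul_le_mul_of_nonneg_left (sum_le_sum fun b _ => hκθ a b) (hq a)
    _ = 1 := by simp only [hθ1, mul_one, hq1]

theorem stmt4_general {S : Type*} [Fintype S] (n : ℕ)
    (θ : S → S → ℝ) (q : S → ℝ) (κ : ℝ)
    (hθpos : ∀ a b, 0 < θ a b)
    (hθ1 : ∀ a, ∑ b, θ a b = 1)
    (hqpos : ∀ a, 0 < q a) (hq1 : ∑ a, q a = 1)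
    (hstat : ∀ b, ∑ a, q a * θ a b = q b)
    (hκ : 0 < κ) (hκθ : ∀ a b, κ * q b ≤ θ a b)
    (p : (Fin n → S) → ℝ) (hp0 : ∀ a, 0 ≤ p a) (hp1 : ∑ a, p a = 1) :
    Dkl (fun b : Fin n → S => ∑ a, p a * ∏ i, θ (a i) (b i)) (fun a : Fin n → S => ∏ i, q (a i))
      ≤ (1 - κ) * Dkl p (fun a : Fin n → S => ∏ i, q (a i)) := by
  have hκ1 : κ ≤ 1 := le_one_of_doeblin hθ1 (fun a => (hqpos a).le) hq1 hκθ
  exact (SDPI.of_doeblin hθ1 hqpos hq1 hstat hκ.le hκθ).pi (sub_nonneg.mpr hκ1)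
    (fun a b => (hθpos a b).le) hθ1 hqpos n p hp0 hp1

/-- Strong data processing inequality for synchronous updating: if `θ : S × S → (0,1)` is a
strictly positive stochastic matrix with stationary distribution `q : S → (0,1)` and
`θ(a,b) ≥ κ q(b)` with `κ > 0`, then for the synchronous product matrix
`θ_n(a,b) = ∏ i, θ (a i) (b i)` on `S^n` and every distribution `p` on `S^n`,
`D(p θ_n ‖ q^{⊗n}) ≤ (1 − κ) D(p ‖ q^{⊗n})`. -/
theorem stmt4 {S : Type*} [Fintype S] (n : ℕ) (hn : 0 < n)
    (θ : S → S → ℝ) (q : S → ℝ) (κ : ℝ)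
    (hθpos : ∀ a b, 0 < θ a b) (hθlt : ∀ a b, θ a b < 1)
    (hθ1 : ∀ a, ∑ b, θ a b = 1)
    (hqpos : ∀ a, 0 < q a) (hqlt : ∀ a, q a < 1) (hq1 : ∑ a, q a = 1)
    (hstat : ∀ b, ∑ a, q a * θ a b = q b)
    (hκ : 0 < κ) (hκθ : ∀ a b, κ * q b ≤ θ a b)
    (p : (Fin n → S) → ℝ) (hp0 : ∀ a, 0 ≤ p a) (hp1 : ∑ a, p a = 1) :
    Dkl (fun b : Fin n → S => ∑ a, p a * ∏ i, θ (a i) (b i)) (fun a : Fin n → S => ∏ i, q (a i))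
      ≤ (1 - κ) * Dkl p (fun a : Fin n → S => ∏ i, q (a i)) :=
  stmt4_general n θ q κ hθpos hθ1 hqpos hq1 hstat hκ hκθ p hp0 hp1
end

section
/- Suppose D : [0,∞) × ℕ → [0,∞) satisfies D(t, n) ≤ α₀ n^d e^{−κt} + β₀ n^{d−1} for constants α₀, β₀ ≥ 0, κ > 0, d ≥ 1 (uniformly over a family of initial conditions), together with the bootstrap inequality D_A(t) ≤ D_B(t)/m^d + H(ε) + ε n^d c whenever B contains m^d disjoint translates of a suitable enlargement of A (as in the bootstrap lemma). Then choosing ε_t = e^{−κt} and m_t = e^{κt}, one obtains for every 0 < β₁ < κ a constant α₁ > 0 such that D_A(t) ≤ α₁ e^{−β₁ t} n^d for all t ≥ 0 and all regions A of diameter n. In particular, combining with Pinsker's inequality ‖μ − λ‖_TV ≤ √(D(μ‖λ)/2), the total variation distance on A is at most √(α₁/2) · e^{−β₁ t/2} · n^{d/2}. -/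
/-!
Fix `β₁ < κ`. At time `t` apply the bootstrap inequality with `ε = e^{-(κt+1)}` and with so many
tiles `m` that the boundary term `β₀ N^{d-1} / m` of the decay bound for the big box drops below
`e^{-κt}`. Since `log n ≤ n` and `log (1/ε) = κt + 1`, the enlarged diameter is at most
`n (a + bt)`, and `H(ε) ≤ ε (1 + log (1/ε))`; so `D_A(t)` is at most `e^{-κt} n^d` times a polynomial in `t`,
which is dominated by `C e^{(κ - β₁) t}`. The total-variation bound is its square root.
-/

open Real

lemma Real.binEntropy_eq_neg_mul_log_sub (p : ℝ) :
    binEntropy p = -(p * log p) - (1 - p) * log (1 - p) := by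
  simp only [binEntropy, log_inv]
  ring

lemma Real.binEntropy_le_mul_one_sub_log {p : ℝ} (hp : p ≤ 1) : binEntropy p ≤ p * (1 - log p) := by
  have h := negMulLog_le_one_sub_self (x := 1 - p) (by linarith)
  rw [binEntropy_eq_negMulLog_add_negMulLog_one_sub, negMulLog]
  linarith

lemma add_mul_le_mul_exp {a b δ t : ℝ} (ha : 0 ≤ a) (hb : 0 ≤ b) (hδ : 0 < δ) (ht : 0 ≤ t) :
    a + b * t ≤ (a + b / δ) * exp (δ * t) := by
  have hexp := add_one_le_exp (δ * t)
  calc a + b * t ≤ (a + b / δ) * (δ * t + 1) := by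
        field_simp
        nlinarith [mul_nonneg (mul_nonneg ha hδ.le) (mul_nonneg hδ.le ht)]
    _ ≤ (a + b / δ) * exp (δ * t) := by gcongr

lemma exists_add_mul_pow_le_mul_exp {a b δ : ℝ} (ha : 0 ≤ a) (hb : 0 ≤ b) (hδ : 0 < δ) (k : ℕ) :
    ∃ C, 0 ≤ C ∧ ∀ t, 0 ≤ t → (a + b * t) ^ k ≤ C * exp (δ * t) := by
  rcases k.eq_zero_or_pos with rfl | hk
  · exact ⟨1, zero_le_one, fun t ht => by simpa using one_le_exp (by positivity)⟩
  have hδk : 0 < δ / k := by positivity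
  refine ⟨(a + b / (δ / k)) ^ k, by positivity, fun t ht => ?_⟩
  calc (a + b * t) ^ k ≤ ((a + b / (δ / k)) * exp (δ / k * t)) ^ k := by
        gcongr
        exact add_mul_le_mul_exp ha hb hδk ht
    _ = (a + b / (δ / k)) ^ k * exp (δ * t) := by
        rw [mul_pow, ← exp_nat_mul]
        field_simp

lemma exp_neg_add_one_lt_half {x : ℝ} (hx : 0 ≤ x) : exp (-(x + 1)) < 1 / 2 := calc
  exp (-(x + 1)) ≤ exp (-1) := exp_le_exp.mpr (by linarith)
  _ < 1 / 2 := by rw [exp_neg, one_div]; exact inv_strictAnti₀ two_pos exp_one_gt_two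

lemma exists_div_pow_le_of_le_add_boundary {f : ℕ → ℝ} {d : ℕ} {α β ε : ℝ} (hd : 1 ≤ d)
    (hε : 0 < ε) (hf : ∀ n : ℕ, 1 ≤ n → f n ≤ α * n ^ d * ε + β * n ^ (d - 1))
    {N : ℕ} (hN : 1 ≤ N) : ∃ m : ℕ, 1 ≤ m ∧ f (m * N) / m ^ d ≤ (α * N ^ d + 1) * ε := by
  set m := ⌈β * N ^ (d - 1) / ε⌉₊ + 1
  have hm : (0 : ℝ) < m := by positivity
  have hboundary : β * N ^ (d - 1) ≤ ε * m := by
    rw [← div_le_iff₀' hε]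
    exact (Nat.le_ceil _).trans (by simp [m])
  refine ⟨m, by simp [m], ?_⟩
  obtain ⟨k, rfl⟩ : ∃ k, d = k + 1 := ⟨d - 1, by omega⟩
  have hfm := hf (m * N) (Nat.one_le_iff_ne_zero.mpr (by positivity))
  simp only [Nat.add_sub_cancel, Nat.cast_mul] at hfm hboundary
  rw [div_le_iff₀ (by positivity)]
  calc f (m * N) ≤ α * (m * N) ^ (k + 1) * ε + β * (m * N) ^ k := hfm
    _ = (α * N ^ (k + 1) * ε) * m ^ (k + 1) + (β * N ^ k) * m ^ k := by ring
    _ ≤ (α * N ^ (k + 1) * ε) * m ^ (k + 1) + (ε * m) * m ^ k := by gcongr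
    _ = (α * N ^ (k + 1) + 1) * ε * m ^ (k + 1) := by ring

lemma add_two_mul_le_mul {x ρ r s L : ℝ} (hx : 1 ≤ x) (hr : 0 ≤ r) (hs : 0 ≤ s) (hL : 0 ≤ L)
    (hρ : ρ ≤ r + s * log x + s * L) : x + 2 * ρ ≤ x * (1 + 2 * s + 2 * (r + s * L)) := by
  have hlog : s * log x ≤ s * x := mul_le_mul_of_nonneg_left (log_le_self (by linarith)) hs
  have hrL : r + s * L ≤ x * (r + s * L) := le_mul_of_one_le_left (by positivity) hx
  linarith

lemma le_mul_pow_of_bootstrap {D : ℕ → ℝ} {d n ρ : ℕ} {α β c e ε r s : ℝ} (hd : 1 ≤ d) (hn : 1 ≤ n)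
    (hα : 0 ≤ α) (hc : 0 ≤ c) (hε₀ : 0 < ε) (hε₁ : ε ≤ 1) (hεe : ε ≤ e) (hr : 0 ≤ r) (hs : 0 ≤ s)
    (hdecay : ∀ n : ℕ, 1 ≤ n → D n ≤ α * n ^ d * e + β * n ^ (d - 1))
    (hρ : (ρ : ℝ) ≤ r + s * log n + s * log (1 / ε))
    (hboot : ∀ m : ℕ, 1 ≤ m →
      D n ≤ D (m * (n + 2 * ρ)) / (m : ℝ) ^ d + binEntropy ε + ε * (n : ℝ) ^ d * c) :
    D n ≤ e * n ^ d *
      (α * (1 + 2 * s + 2 * (r + s * log (1 / ε))) ^ d + (2 + c + log (1 / ε))) := by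
  set L := log (1 / ε)
  have hL : 0 ≤ L := log_nonneg (by rw [le_div_iff₀ hε₀]; linarith)
  have hn' : (1 : ℝ) ≤ n := by exact_mod_cast hn
  have hnd : (1 : ℝ) ≤ (n : ℝ) ^ d := one_le_pow₀ hn'
  have he : 0 ≤ e := hε₀.le.trans hεe
  obtain ⟨m, hm, htiled⟩ := exists_div_pow_le_of_le_add_boundary hd (hε₀.trans_le hεe) hdecay
    (N := n + 2 * ρ) (by omega)
  have hdiam : ((n + 2 * ρ : ℕ) : ℝ) ≤ n * (1 + 2 * s + 2 * (r + s * L)) := by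
    push_cast
    exact add_two_mul_le_mul hn' hr hs hL hρ
  have hentropy : binEntropy ε ≤ ε * (1 + L) := by
    simpa [L, log_inv, sub_eq_add_neg] using binEntropy_le_mul_one_sub_log hε₁
  calc D n ≤ D (m * (n + 2 * ρ)) / (m : ℝ) ^ d + binEntropy ε + ε * (n : ℝ) ^ d * c := hboot m hm
    _ ≤ (α * (n * (1 + 2 * s + 2 * (r + s * L))) ^ d + 1) * e + e * (1 + L) + e * n ^ d * c := by
        gcongr
        · exact htiled.trans (by gcongr)
        · exact hentropy.trans (by gcongr)
    _ ≤ e * n ^ d * (α * (1 + 2 * s + 2 * (r + s * L)) ^ d + (2 + c + L)) := by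
        rw [mul_pow]
        nlinarith [mul_le_mul_of_nonneg_left hnd (by positivity : 0 ≤ e * (2 + L))]

lemma sqrt_half_le_of_le_mul_exp {D α β t x : ℝ} {d : ℕ} (hx : 0 ≤ x)
    (h : D ≤ α * exp (-β * t) * x ^ d) :
    √(D / 2) ≤ √(α / 2) * exp (-(β / 2) * t) * x ^ ((d : ℝ) / 2) := by
  have hsq : (exp (-(β / 2) * t) * x ^ ((d : ℝ) / 2)) ^ 2 = exp (-β * t) * x ^ d := by
    rw [mul_pow, ← exp_nat_mul, ← rpow_natCast (x ^ _), ← rpow_mul hx, ← rpow_natCast x d]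
    congr 2 <;> push_cast <;> ring
  calc √(D / 2) ≤ √(α / 2 * (exp (-(β / 2) * t) * x ^ ((d : ℝ) / 2)) ^ 2) := by
        rw [hsq]
        gcongr
        linarith
    _ = √(α / 2) * exp (-(β / 2) * t) * x ^ ((d : ℝ) / 2) := by
        rw [sqrt_mul' _ (sq_nonneg _), sqrt_sq (by positivity), mul_assoc]

theorem stmt19_general
    (d : ℕ) (hd : 1 ≤ d)
    (α₀ β₀ : ℝ) (hα₀ : 0 ≤ α₀)
    (κ c : ℝ) (hκ : 0 < κ) (hc : 0 < c)
    (DA : ℝ → ℕ → ℝ)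
    (hdecay : ∀ t : ℝ, 0 ≤ t → ∀ n : ℕ, 1 ≤ n →
      DA t n ≤ α₀ * (n : ℝ) ^ d * Real.exp (-κ * t) + β₀ * (n : ℝ) ^ (d - 1))
    (R : ℝ → ℝ → ℕ → ℕ) (r₁ r₂ : ℝ) (hr₁ : 0 ≤ r₁) (hr₂ : 0 ≤ r₂)
    (hR : ∀ t : ℝ, 0 ≤ t → ∀ ε : ℝ, 0 < ε → ∀ n : ℕ, 1 ≤ n →
      (R t ε n : ℝ) ≤ r₁ * t + r₂ * Real.log n + r₂ * Real.log (1 / ε))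
    (hboot : ∀ t : ℝ, 0 ≤ t → ∀ n : ℕ, 1 ≤ n → ∀ ε : ℝ, 0 < ε → ε < 1 / 2 →
      ∀ m : ℕ, 1 ≤ m →
        DA t n ≤ DA t (m * (n + 2 * R t ε n)) / (m : ℝ) ^ d
          + (-(ε * Real.log ε) - (1 - ε) * Real.log (1 - ε))
          + ε * (n : ℝ) ^ d * c) :
    ∀ β₁ : ℝ, 0 < β₁ → β₁ < κ →
      ∃ α₁ : ℝ, 0 < α₁ ∧
        ∀ t : ℝ, 0 ≤ t → ∀ n : ℕ, 1 ≤ n →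
          DA t n ≤ α₁ * Real.exp (-β₁ * t) * (n : ℝ) ^ d ∧
          ∀ TV : ℝ, TV ≤ Real.sqrt (DA t n / 2) →
            TV ≤ Real.sqrt (α₁ / 2) * Real.exp (-(β₁ / 2) * t) * (n : ℝ) ^ ((d : ℝ) / 2) := by
  intro β₁ _ hβκ
  have hδ : 0 < κ - β₁ := sub_pos.mpr hβκ
  obtain ⟨C, hC₀, hC⟩ := exists_add_mul_pow_le_mul_exp (a := 1 + 4 * r₂) (b := 2 * (r₁ + r₂ * κ))
    (by positivity) (by positivity) hδ d
  refine ⟨α₀ * C + (3 + c + κ / (κ - β₁)), by positivity, fun t ht n hn => ?_⟩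
  -- the shift by 1 keeps ε < 1/2 already at t = 0
  set ε := exp (-(κ * t + 1))
  have hε₀ : 0 < ε := exp_pos _
  have hεe : ε ≤ exp (-κ * t) := exp_le_exp.mpr (by linarith)
  have hε₁ : ε < 1 / 2 := exp_neg_add_one_lt_half (by positivity)
  have hL : log (1 / ε) = κ * t + 1 := by rw [one_div, ← exp_neg, log_exp, neg_neg]
  have hstep := le_mul_pow_of_bootstrap hd hn hα₀ hc.le hε₀ (by linarith) hεe
    (mul_nonneg hr₁ ht) hr₂ (hdecay t ht) (hR t ht ε hε₀ n hn)
    (by simpa only [← binEntropy_eq_neg_mul_log_sub] using hboot t ht n hn ε hε₀ hε₁)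
  have hD : DA t n ≤ (α₀ * C + (3 + c + κ / (κ - β₁))) * exp (-β₁ * t) * n ^ d := calc
    DA t n ≤ exp (-κ * t) * n ^ d *
        (α₀ * (1 + 4 * r₂ + 2 * (r₁ + r₂ * κ) * t) ^ d + (3 + c + κ * t)) := by
      rw [hL] at hstep
      convert hstep using 3 <;> ring
    _ ≤ exp (-κ * t) * n ^ d * (α₀ * (C * exp ((κ - β₁) * t))
        + (3 + c + κ / (κ - β₁)) * exp ((κ - β₁) * t)) := by
      gcongr
      · exact hC t ht
      · exact add_mul_le_mul_exp (by positivity) hκ.le hδ ht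
    _ = _ := by
      rw [show -β₁ * t = -κ * t + (κ - β₁) * t by ring, exp_add]
      ring
  exact ⟨hD, fun TV hTV => hTV.trans (sqrt_half_le_of_le_mul_exp (Nat.cast_nonneg n) hD)⟩

/-- Quantitative bootstrapping: suppose `DA t n` (the supremal relative entropy at time `t` of
regions of diameter `n`, over all initial conditions) is nonnegative and satisfies
(i) the decay-up-to-boundary bound `DA t n ≤ α₀ n^d e^{−κt} + β₀ n^{d−1}`, and
(ii) the bootstrap inequality
`DA t n ≤ DA t (m(n + 2 R(t,ε,n)))/m^d + H(ε) + ε n^d c`, where the enlargement radius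
`R(t,ε,n)` grows at most linearly in `t` and logarithmically in `n` and `1/ε`.
Then for every `0 < β₁ < κ` there is `α₁ > 0` with `DA t n ≤ α₁ e^{−β₁ t} n^d`; and via
Pinsker's inequality the total variation distance is at most
`√(α₁/2) e^{−β₁ t/2} n^{d/2}`. -/
theorem stmt19
    (d : ℕ) (hd : 1 ≤ d)
    (α₀ β₀ : ℝ) (hα₀ : 0 ≤ α₀) (hβ₀ : 0 ≤ β₀)
    (κ c : ℝ) (hκ : 0 < κ) (hc : 0 < c)
    (DA : ℝ → ℕ → ℝ)
    (hDnonneg : ∀ t n, 0 ≤ DA t n)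
    (hdecay : ∀ t : ℝ, 0 ≤ t → ∀ n : ℕ, 1 ≤ n →
      DA t n ≤ α₀ * (n : ℝ) ^ d * Real.exp (-κ * t) + β₀ * (n : ℝ) ^ (d - 1))
    (R : ℝ → ℝ → ℕ → ℕ) (r₁ r₂ : ℝ) (hr₁ : 0 ≤ r₁) (hr₂ : 0 ≤ r₂)
    (hR : ∀ t : ℝ, 0 ≤ t → ∀ ε : ℝ, 0 < ε → ∀ n : ℕ, 1 ≤ n →
      (R t ε n : ℝ) ≤ r₁ * t + r₂ * Real.log n + r₂ * Real.log (1 / ε))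
    (hboot : ∀ t : ℝ, 0 ≤ t → ∀ n : ℕ, 1 ≤ n → ∀ ε : ℝ, 0 < ε → ε < 1 / 2 →
      ∀ m : ℕ, 1 ≤ m →
        DA t n ≤ DA t (m * (n + 2 * R t ε n)) / (m : ℝ) ^ d
          + (-(ε * Real.log ε) - (1 - ε) * Real.log (1 - ε))
          + ε * (n : ℝ) ^ d * c) :
    ∀ β₁ : ℝ, 0 < β₁ → β₁ < κ →
      ∃ α₁ : ℝ, 0 < α₁ ∧
        ∀ t : ℝ, 0 ≤ t → ∀ n : ℕ, 1 ≤ n →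
          DA t n ≤ α₁ * Real.exp (-β₁ * t) * (n : ℝ) ^ d ∧
          ∀ TV : ℝ, TV ≤ Real.sqrt (DA t n / 2) →
            TV ≤ Real.sqrt (α₁ / 2) * Real.exp (-(β₁ / 2) * t) * (n : ℝ) ^ ((d : ℝ) / 2) :=
  stmt19_general d hd α₀ β₀ hα₀ κ c hκ hc DA hdecay R r₁ r₂ hr₁ hr₂ hR hboot
end
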